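/- Let u be twice continuously differentiable on the closure of Ω, let φ and α be real constants, and suppose u satisfies the boundary conditions (BC). Then ∫_Ω |∇u|² dx ≤ πρ²(2φα + φ²) + 4h² ∫_Ω (Δu)² dx. -/

import Mathlib

open MeasureTheory Real

/-- The open cylinder `Ω = {(x,y,z) : x² + y² < ρ², 0 < z < h}` in `ℝ³`. -/
def cyl (ρ h : ℝ) : Set (Fin 3 → ℝ) :=
  {x | (x 0) ^ 2 + (x 1) ^ 2 < ρ ^ 2 ∧ 0 < x 2 ∧ x 2 < h}

/-- The `i`-th partial derivative of `f`, computed within the closed cylinder. -/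
noncomputable def pdC (ρ h : ℝ) (i : Fin 3) (f : (Fin 3 → ℝ) → ℝ) (x : Fin 3 → ℝ) : ℝ :=
  fderivWithin ℝ f (closure (cyl ρ h)) x (Pi.single i 1)

/-- The Laplacian of `f`, computed within the closed cylinder. -/
noncomputable def lapC (ρ h : ℝ) (f : (Fin 3 → ℝ) → ℝ) (x : Fin 3 → ℝ) : ℝ :=
  ∑ i, pdC ρ h i (pdC ρ h i f) x

/-- The boundary conditions (BC): `u = φ` and `∂u/∂z = α` on the top disc `z = h`;
`u = 0` and `∂u/∂z = 0` on the bottom disc `z = 0`; and vanishing normal derivative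
`x ∂u/∂x + y ∂u/∂y = 0` on the lateral boundary `x² + y² = ρ²`, `0 ≤ z ≤ h`. -/
def BC (ρ h : ℝ) (u : (Fin 3 → ℝ) → ℝ) (φ α : ℝ) : Prop :=
  (∀ x y : ℝ, x ^ 2 + y ^ 2 ≤ ρ ^ 2 →
      u ![x, y, h] = φ ∧ pdC ρ h 2 u ![x, y, h] = α ∧
      u ![x, y, 0] = 0 ∧ pdC ρ h 2 u ![x, y, 0] = 0) ∧
  (∀ x y z : ℝ, x ^ 2 + y ^ 2 = ρ ^ 2 → 0 ≤ z → z ≤ h →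
      x * pdC ρ h 0 u ![x, y, z] + y * pdC ρ h 1 u ![x, y, z] = 0)

open Set

/-!
Green's identity on the cylinder gives `∫ |∇u|² + ∫ u Δu = πρ² φ α`: along each vertical segment
the boundary term is `u ∂_z u` between the heights `0` and `h`, and on each horizontal disc the
boundary flux of `u ∇u` is a multiple of `u (x ∂ₓu + y ∂_y u)`, which vanishes; the divergence
theorem on the disc is pulled back from the one on a rectangle through polar coordinates. As `u`
vanishes on the bottom, a one-dimensional Poincaré inequality gives
`∫ u² ≤ 4h² ∫ (∂_z u)² ≤ 4h² ∫ |∇u|²`, and integrating `-u Δu ≤ u² / (8h²) + 2h² (Δu)²` yields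
`∫ |∇u|² ≤ 2πρ²φα + 4h² ∫ (Δu)²`.
-/

def disc (ρ : ℝ) : Set (ℝ × ℝ) := {q | q.1 ^ 2 + q.2 ^ 2 < ρ ^ 2}

def closedDisc (ρ : ℝ) : Set (ℝ × ℝ) := {q | q.1 ^ 2 + q.2 ^ 2 ≤ ρ ^ 2}

section Disc

variable {ρ : ℝ}

lemma isOpen_disc : IsOpen (disc ρ) := isOpen_lt (by fun_prop) continuous_const

lemma disc_subset_closedDisc : disc ρ ⊆ closedDisc ρ := fun _ hq => le_of_lt (α := ℝ) hq

lemma measurableSet_disc : MeasurableSet (disc ρ) := isOpen_disc.measurableSet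

lemma measureReal_disc (hρ : 0 ≤ ρ) : volume.real (disc ρ) = π * ρ ^ 2 := by
  have hball : Complex.measurableEquivRealProd ⁻¹' disc ρ = Metric.ball 0 ρ := by
    ext z
    rw [mem_preimage, Metric.mem_ball, dist_zero_right, ← sq_lt_sq₀ (norm_nonneg z) hρ,
      Complex.sq_norm, Complex.normSq_apply]
    simp [disc, sq]
  rw [measureReal_def, ← Complex.volume_preserving_equiv_real_prod.measure_preimage
    measurableSet_disc.nullMeasurableSet, hball, Complex.volume_ball]
  simp [ENNReal.toReal_ofReal hρ, mul_comm]

lemma polarCoord_symm_sq_add_sq (p : ℝ × ℝ) :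
    (polarCoord.symm p).1 ^ 2 + (polarCoord.symm p).2 ^ 2 = p.1 ^ 2 := by
  simp only [polarCoord_symm_apply]
  linear_combination p.1 ^ 2 * sin_sq_add_cos_sq p.2

lemma polarCoord_target_inter_preimage_disc (hρ : 0 < ρ) :
    polarCoord.target ∩ polarCoord.symm ⁻¹' disc ρ = Ioo 0 ρ ×ˢ Ioo (-π) π := by
  ext ⟨r, θ⟩
  simp only [polarCoord_target, mem_inter_iff, mem_prod, mem_preimage, disc, mem_ofPred_eq,
    polarCoord_symm_sq_add_sq, mem_Ioi, mem_Ioo]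
  constructor
  · rintro ⟨⟨hr, hθ⟩, hrρ⟩
    exact ⟨⟨hr, (sq_lt_sq₀ hr.le hρ.le).1 hrρ⟩, hθ⟩
  · rintro ⟨⟨hr, hrρ⟩, hθ⟩
    exact ⟨⟨hr, hθ⟩, (sq_lt_sq₀ hr.le hρ.le).2 hrρ⟩

lemma setIntegral_disc_eq_polar (hρ : 0 < ρ) (F : ℝ × ℝ → ℝ) :
    ∫ q in disc ρ, F q = ∫ p in Ioo 0 ρ ×ˢ Ioo (-π) π, p.1 * F (polarCoord.symm p) := by
  rw [← integral_indicator measurableSet_disc, ← integral_comp_polarCoord_symm,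
    ← polarCoord_target_inter_preimage_disc hρ, ← setIntegral_indicator
      (measurableSet_disc.preimage continuous_polarCoord_symm.measurable)]
  congr 1
  ext p
  by_cases hp : polarCoord.symm p ∈ disc ρ
  · rw [indicator_of_mem hp, indicator_of_mem (mem_preimage.2 hp), smul_eq_mul]
  · rw [indicator_of_notMem hp, indicator_of_notMem (mt mem_preimage.1 hp), smul_zero]

end Disc

section Divergence

variable {ρ : ℝ}

lemma mapsTo_polarCoord_symm_disc (hρ : 0 < ρ) :
    MapsTo polarCoord.symm (Ioo 0 ρ ×ˢ Ioo (-π) π) (disc ρ) := fun p hp => by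
  rw [← polarCoord_target_inter_preimage_disc hρ] at hp
  exact hp.2

lemma mapsTo_polarCoord_symm_closedDisc :
    MapsTo polarCoord.symm (Icc 0 ρ ×ˢ Icc (-π) π) (closedDisc ρ) := fun p hp => by
  show (polarCoord.symm p).1 ^ 2 + (polarCoord.symm p).2 ^ 2 ≤ ρ ^ 2
  rw [polarCoord_symm_sq_add_sq]
  exact pow_le_pow_left₀ hp.1.1 hp.1.2 2

lemma fderivPolarCoordSymm_apply_one_zero (p : ℝ × ℝ) :
    fderivPolarCoordSymm p (1, 0) = (cos p.2, sin p.2) := by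
  simp [fderivPolarCoordSymm, Matrix.toLin_finTwoProd_apply]

lemma fderivPolarCoordSymm_apply_zero_one (p : ℝ × ℝ) :
    fderivPolarCoordSymm p (0, 1) = (-p.1 * sin p.2, p.1 * cos p.2) := by
  simp [fderivPolarCoordSymm, Matrix.toLin_finTwoProd_apply]

lemma ContinuousLinearMap.apply_mk_eq_add (L : ℝ × ℝ →L[ℝ] ℝ) (x y : ℝ) :
    L (x, y) = x * L (1, 0) + y * L (0, 1) := by
  rw [show ((x, y) : ℝ × ℝ) = x • (1, 0) + y • (0, 1) by simp, map_add, map_smul, map_smul,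
    smul_eq_mul, smul_eq_mul]

/-- The derivatives of the fluxes `f = x A + y B` and `g = cos θ B - sin θ A` in polar
coordinates, as produced by the product and chain rules, satisfy
`∂ᵣ f + ∂_θ g = r (∂ₓ A + ∂_y B)`. -/
lemma polar_flux_divergence (p : ℝ × ℝ) (A B : ℝ) (a b : ℝ × ℝ →L[ℝ] ℝ) :
    ((polarCoord.symm p).1 • a.comp (fderivPolarCoordSymm p) +
          A • (ContinuousLinearMap.fst ℝ ℝ ℝ).comp (fderivPolarCoordSymm p) +
        ((polarCoord.symm p).2 • b.comp (fderivPolarCoordSymm p) +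
          B • (ContinuousLinearMap.snd ℝ ℝ ℝ).comp (fderivPolarCoordSymm p))) (1, 0) +
      ((cos p.2 • b.comp (fderivPolarCoordSymm p) +
          B • (-sin p.2) • ContinuousLinearMap.snd ℝ ℝ ℝ) -
        (sin p.2 • a.comp (fderivPolarCoordSymm p) +
          A • cos p.2 • ContinuousLinearMap.snd ℝ ℝ ℝ)) (0, 1) =
      p.1 * (a (1, 0) + b (0, 1)) := by
  simp only [add_apply, sub_apply, smul_apply, ContinuousLinearMap.comp_apply,
    fderivPolarCoordSymm_apply_one_zero, fderivPolarCoordSymm_apply_zero_one,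
    ContinuousLinearMap.coe_fst', ContinuousLinearMap.coe_snd', smul_eq_mul,
    polarCoord_symm_apply]
  rw [a.apply_mk_eq_add (cos p.2), a.apply_mk_eq_add (-p.1 * sin p.2),
    b.apply_mk_eq_add (cos p.2), b.apply_mk_eq_add (-p.1 * sin p.2)]
  linear_combination p.1 * (a (1, 0) + b (0, 1)) * sin_sq_add_cos_sq p.2

lemma integral_Icc_divergence_eq_zero {f g : ℝ × ℝ → ℝ} {f' g' : ℝ × ℝ → ℝ × ℝ →L[ℝ] ℝ}
    {a b : ℝ × ℝ} (hab : a ≤ b) (hfc : ContinuousOn f (Icc a b)) (hgc : ContinuousOn g (Icc a b))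
    (hf : ∀ x ∈ Ioo a.1 b.1 ×ˢ Ioo a.2 b.2, HasFDerivAt f (f' x) x)
    (hg : ∀ x ∈ Ioo a.1 b.1 ×ˢ Ioo a.2 b.2, HasFDerivAt g (g' x) x)
    (hi : IntegrableOn (fun x => f' x (1, 0) + g' x (0, 1)) (Icc a b))
    (hf_left : ∀ y, f (a.1, y) = 0) (hf_right : ∀ y, f (b.1, y) = 0)
    (hg_per : ∀ x, g (x, b.2) = g (x, a.2)) :
    ∫ x in Icc a b, (f' x (1, 0) + g' x (0, 1)) = 0 := by
  simp [integral_divergence_prod_Icc_of_hasFDerivAt_of_le f g f' g' a b hab hfc hgc hf hg hi,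
    hf_left, hf_right, hg_per]

theorem integral_disc_divergence_eq_zero (hρ : 0 < ρ) {A B : ℝ × ℝ → ℝ}
    {dA dB : ℝ × ℝ → ℝ × ℝ →L[ℝ] ℝ}
    (hA : ∀ q ∈ disc ρ, HasFDerivAt A (dA q) q) (hB : ∀ q ∈ disc ρ, HasFDerivAt B (dB q) q)
    (hAc : ContinuousOn A (closedDisc ρ)) (hBc : ContinuousOn B (closedDisc ρ))
    (hdiv : ContinuousOn (fun q => dA q (1, 0) + dB q (0, 1)) (closedDisc ρ))
    (hbdry : ∀ q : ℝ × ℝ, q.1 ^ 2 + q.2 ^ 2 = ρ ^ 2 → q.1 * A q + q.2 * B q = 0) :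
    ∫ q in disc ρ, (dA q (1, 0) + dB q (0, 1)) = 0 := by
  set Φ : ℝ × ℝ → ℝ × ℝ := ⇑polarCoord.symm
  set P := fderivPolarCoordSymm
  set f : ℝ × ℝ → ℝ := fun p => (Φ p).1 * A (Φ p) + (Φ p).2 * B (Φ p)
  set g : ℝ × ℝ → ℝ := fun p => cos p.2 * B (Φ p) - sin p.2 * A (Φ p)
  set f' : ℝ × ℝ → ℝ × ℝ →L[ℝ] ℝ := fun p =>
    ((Φ p).1 • (dA (Φ p)).comp (P p) + A (Φ p) • (ContinuousLinearMap.fst ℝ ℝ ℝ).comp (P p)) +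
    ((Φ p).2 • (dB (Φ p)).comp (P p) + B (Φ p) • (ContinuousLinearMap.snd ℝ ℝ ℝ).comp (P p))
  set g' : ℝ × ℝ → ℝ × ℝ →L[ℝ] ℝ := fun p =>
    (cos p.2 • (dB (Φ p)).comp (P p) + B (Φ p) • (-sin p.2) • ContinuousLinearMap.snd ℝ ℝ ℝ) -
    (sin p.2 • (dA (Φ p)).comp (P p) + A (Φ p) • cos p.2 • ContinuousLinearMap.snd ℝ ℝ ℝ)
  have hrect : (Icc (0, -π) (ρ, π) : Set (ℝ × ℝ)) = Icc 0 ρ ×ˢ Icc (-π) π := Icc_prod_eq _ _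
  have hΦ := mapsTo_polarCoord_symm_disc hρ
  have hΦd := hasFDerivAt_polarCoord_symm
  have hΦc : ContinuousOn Φ (Icc (0, -π) (ρ, π)) := continuous_polarCoord_symm.continuousOn
  have hΦ_closed : MapsTo Φ (Icc (0, -π) (ρ, π)) (closedDisc ρ) :=
    hrect ▸ mapsTo_polarCoord_symm_closedDisc
  have hAΦ : ContinuousOn (fun p => A (Φ p)) (Icc (0, -π) (ρ, π)) := hAc.comp hΦc hΦ_closed
  have hBΦ : ContinuousOn (fun p => B (Φ p)) (Icc (0, -π) (ρ, π)) := hBc.comp hΦc hΦ_closed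
  have hpolar : ∀ p, f' p (1, 0) + g' p (0, 1) = p.1 * (dA (Φ p) (1, 0) + dB (Φ p) (0, 1)) :=
    fun p => polar_flux_divergence p _ _ _ _
  have hdivc : ContinuousOn (fun p => f' p (1, 0) + g' p (0, 1)) (Icc (0, -π) (ρ, π)) := by
    simp_rw [hpolar]
    exact continuousOn_fst.mul (hdiv.comp hΦc hΦ_closed)
  have hstokes := integral_Icc_divergence_eq_zero (f := f) (g := g) (f' := f') (g' := g')
    (show ((0, -π) : ℝ × ℝ) ≤ (ρ, π) from ⟨hρ.le, by linarith [pi_pos]⟩)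
    (by fun_prop) (by fun_prop)
    (fun p hp => ((hΦd p).fst.mul ((hA _ (hΦ hp)).comp p (hΦd p))).add
      ((hΦd p).snd.mul ((hB _ (hΦ hp)).comp p (hΦd p))))
    (fun p hp => (((hasDerivAt_cos p.2).comp_hasFDerivAt p hasFDerivAt_snd).mul
      ((hB _ (hΦ hp)).comp p (hΦd p))).sub
      (((hasDerivAt_sin p.2).comp_hasFDerivAt p hasFDerivAt_snd).mul
        ((hA _ (hΦ hp)).comp p (hΦd p))))
    (hdivc.integrableOn_compact isCompact_Icc) (fun θ => by simp [f, Φ])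
    (fun θ => hbdry _ (by rw [polarCoord_symm_sq_add_sq])) (fun r => by simp [g, Φ])
  have hae : (Ioo 0 ρ ×ˢ Ioo (-π) π : Set (ℝ × ℝ)) =ᵐ[volume] Icc 0 ρ ×ˢ Icc (-π) π :=
    Measure.set_prod_ae_eq Ioo_ae_eq_Icc Ioo_ae_eq_Icc
  rw [setIntegral_disc_eq_polar hρ, setIntegral_congr_set hae, ← hrect]
  refine Eq.trans ?_ hstokes
  simp_rw [hpolar]
  rfl

end Divergence

section Interval

theorem integral_sq_le_of_apply_left_eq_zero {f f' : ℝ → ℝ} {a b : ℝ} (hab : a ≤ b)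
    (hf : ContinuousOn f (Icc a b)) (hf' : ContinuousOn f' (Icc a b))
    (hderiv : ∀ t ∈ Ioo a b, HasDerivAt f (f' t) t) (ha : f a = 0) :
    ∫ t in a..b, f t ^ 2 ≤ 4 * (b - a) ^ 2 * ∫ t in a..b, f' t ^ 2 := by
  set G : ℝ → ℝ := fun t => f t ^ 2 + (t - b) * (2 * f t * f' t)
  -- integration by parts against the weight `t - b`, which vanishes at `b`, as `f` does at `a`
  have hG : ∫ t in a..b, G t = 0 := by
    have hIoo : Ioo (min a b) (max a b) = Ioo a b := by rw [min_eq_left hab, max_eq_right hab]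
    have hf'' : ContinuousOn (fun t => 2 * f t * f' t) (Icc a b) := by fun_prop
    have := intervalIntegral.integral_deriv_mul_eq_sub_of_hasDerivAt (u := fun t => t - b)
      (v := fun t => f t ^ 2) (by fun_prop) (by rw [uIcc_of_le hab]; exact hf.pow 2)
      (fun t _ => (hasDerivAt_id t).sub_const b)
      (fun t ht => ((hderiv t (hIoo ▸ ht)).pow 2).congr_deriv (by ring))
      intervalIntegrable_const (hf''.intervalIntegrable_of_Icc hab)
    simpa [G, ha] using this
  have hpt : ∀ t ∈ Icc a b, f t ^ 2 ≤ 2 * G t + 4 * (b - a) ^ 2 * f' t ^ 2 := fun t ht => by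
    have : 0 ≤ (b - a) ^ 2 - (t - b) ^ 2 := by nlinarith [ht.1, ht.2]
    nlinarith [sq_nonneg (f t + 2 * (t - b) * f' t), mul_nonneg this (sq_nonneg (f' t))]
  have hG_int : IntervalIntegrable G volume a b :=
    (by fun_prop : ContinuousOn G (Icc a b)).intervalIntegrable_of_Icc hab
  have hf'_int : IntervalIntegrable (fun t => f' t ^ 2) volume a b :=
    (hf'.pow 2).intervalIntegrable_of_Icc hab
  calc ∫ t in a..b, f t ^ 2
      ≤ ∫ t in a..b, (2 * G t + 4 * (b - a) ^ 2 * f' t ^ 2) :=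
        intervalIntegral.integral_mono_on hab ((hf.pow 2).intervalIntegrable_of_Icc hab)
          ((hG_int.const_mul 2).add (hf'_int.const_mul _)) hpt
    _ = 4 * (b - a) ^ 2 * ∫ t in a..b, f' t ^ 2 := by
        rw [intervalIntegral.integral_add (hG_int.const_mul 2) (hf'_int.const_mul _),
          intervalIntegral.integral_const_mul, intervalIntegral.integral_const_mul, hG, mul_zero,
          zero_add]

end Interval

section Cylinder

variable {ρ h : ℝ}

lemma isOpen_cyl : IsOpen (cyl ρ h) := by
  simp only [cyl, ofPred_and]
  exact (isOpen_lt (by fun_prop) continuous_const).inter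
    ((isOpen_lt continuous_const (continuous_apply 2)).inter
      (isOpen_lt (continuous_apply 2) continuous_const))

lemma convex_cyl : Convex ℝ (cyl ρ h) := by
  have hsq : ∀ i : Fin 3, ConvexOn ℝ univ fun x : Fin 3 → ℝ => x i ^ 2 := fun i => by
    simpa [Function.comp_def] using (Even.convexOn_pow (𝕜 := ℝ) even_two).comp_linearMap
      (LinearMap.proj (R := ℝ) (φ := fun _ : Fin 3 => ℝ) i)
  have hdisc := ((hsq 0).add (hsq 1)).convex_lt (ρ ^ 2)
  simp only [mem_univ, true_and] at hdisc
  have hz := (LinearMap.proj (R := ℝ) (φ := fun _ : Fin 3 => ℝ) 2).isLinear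
  exact hdisc.inter ((convex_halfSpace_gt hz 0).inter (convex_halfSpace_lt hz h))

lemma vec_mem_closure_cyl (hρ : 0 < ρ) (hh : 0 < h) {q : ℝ × ℝ} (hq : q ∈ closedDisc ρ) {t : ℝ}
    (ht : t ∈ Icc 0 h) : ![q.1, q.2, t] ∈ closure (cyl ρ h) := by
  have hq' : q.1 ^ 2 + q.2 ^ 2 ≤ ρ ^ 2 := hq
  have hseg : openSegment ℝ ![0, 0, h / 2] ![q.1, q.2, t] ⊆ cyl ρ h := by
    rintro _ ⟨μ, ν, hμ, hν, hμν, rfl⟩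
    show (μ * 0 + ν * q.1) ^ 2 + (μ * 0 + ν * q.2) ^ 2 < ρ ^ 2 ∧
      0 < μ * (h / 2) + ν * t ∧ μ * (h / 2) + ν * t < h
    have hν2 : ν ^ 2 < 1 := by nlinarith
    refine ⟨?_, by nlinarith [ht.1], by nlinarith [ht.2]⟩
    nlinarith [mul_le_mul_of_nonneg_left hq' (sq_nonneg ν),
      mul_lt_mul_of_pos_right hν2 (pow_pos hρ 2)]
  exact closure_mono hseg (segment_subset_closure_openSegment (right_mem_segment ℝ _ _))

lemma isCompact_closure_cyl : IsCompact (closure (cyl ρ h)) := by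
  set c : Fin 3 → ℝ := fun _ => |ρ| + |h|
  refine (isCompact_Icc (a := -c) (b := c)).of_isClosed_subset isClosed_closure
    (closure_minimal ?_ isClosed_Icc)
  rintro x ⟨hx, hx0, hxh⟩
  have h0 : |x 0| ≤ |ρ| := sq_le_sq.1 (by nlinarith [sq_nonneg (x 1)])
  have h1 : |x 1| ≤ |ρ| := sq_le_sq.1 (by nlinarith [sq_nonneg (x 0)])
  have h2 : |x 2| ≤ |h| := abs_le_abs_of_nonneg hx0.le hxh.le
  have hb : ∀ i, |x i| ≤ c i := by
    intro i
    fin_cases i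
    exacts [le_add_of_le_of_nonneg h0 (abs_nonneg h), le_add_of_le_of_nonneg h1 (abs_nonneg h),
      le_add_of_nonneg_of_le (abs_nonneg ρ) h2]
  exact ⟨fun i => (abs_le.1 (hb i)).1, fun i => (abs_le.1 (hb i)).2⟩

lemma center_mem_cyl (hρ : 0 < ρ) (hh : 0 < h) : ![0, 0, h / 2] ∈ cyl ρ h := by
  show (0 : ℝ) ^ 2 + 0 ^ 2 < ρ ^ 2 ∧ 0 < h / 2 ∧ h / 2 < h
  exact ⟨by simpa using pow_pos hρ 2, by positivity, by linarith⟩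

lemma uniqueDiffOn_closure_cyl (hρ : 0 < ρ) (hh : 0 < h) :
    UniqueDiffOn ℝ (closure (cyl ρ h)) := by
  refine uniqueDiffOn_convex convex_cyl.closure ⟨![0, 0, h / 2], interior_mono subset_closure ?_⟩
  rw [isOpen_cyl.interior_eq]
  exact center_mem_cyl hρ hh

lemma integrableOn_cyl_of_continuousOn {f : (Fin 3 → ℝ) → ℝ}
    (hf : ContinuousOn f (closure (cyl ρ h))) : IntegrableOn f (cyl ρ h) :=
  (hf.integrableOn_compact isCompact_closure_cyl).mono_set subset_closure

end Cylinder

section Fubini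

variable {ρ h : ℝ}

/-- `x ↦ (x 2, (x 0, x 1))`: splits `ℝ³` into height and horizontal plane. -/
noncomputable def splitHeight : (Fin 3 → ℝ) ≃ᵐ ℝ × (ℝ × ℝ) :=
  (MeasurableEquiv.piFinSuccAbove (fun _ : Fin 3 => ℝ) 2).trans
    ((MeasurableEquiv.refl ℝ).prodCongr MeasurableEquiv.finTwoArrow)

lemma splitHeight_symm_apply (z x y : ℝ) : splitHeight.symm (z, (x, y)) = ![x, y, z] := by
  funext i
  fin_cases i <;> rfl

lemma measurePreserving_splitHeight : MeasurePreserving splitHeight volume volume :=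
  ((MeasurePreserving.id volume).prod (volume_preserving_finTwoArrow ℝ)).comp
    (volume_preserving_piFinSuccAbove (fun _ : Fin 3 => ℝ) 2)

lemma splitHeight_symm_preimage_cyl : splitHeight.symm ⁻¹' cyl ρ h = Ioo 0 h ×ˢ disc ρ := by
  ext ⟨z, x, y⟩
  rw [mem_preimage, splitHeight_symm_apply]
  exact ⟨fun ⟨hxy, hz⟩ => ⟨hz, hxy⟩, fun ⟨hz, hxy⟩ => ⟨hxy, hz⟩⟩

lemma integrable_prod_of_integrableOn_cyl {f : (Fin 3 → ℝ) → ℝ} (hf : IntegrableOn f (cyl ρ h)) :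
    Integrable (fun p : ℝ × (ℝ × ℝ) => f ![p.2.1, p.2.2, p.1])
      ((volume.restrict (Ioo 0 h)).prod (volume.restrict (disc ρ))) := by
  have hmp : MeasurePreserving splitHeight.symm (volume.restrict (Ioo 0 h ×ˢ disc ρ))
      (volume.restrict (cyl ρ h)) := by
    simpa only [splitHeight_symm_preimage_cyl] using
      (measurePreserving_splitHeight.symm _).restrict_preimage isOpen_cyl.measurableSet
  rw [Measure.prod_restrict, ← Measure.volume_eq_prod]
  refine ((hmp.integrable_comp_emb splitHeight.symm.measurableEmbedding).2 hf).congr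
    (ae_of_all _ fun ⟨z, x, y⟩ => ?_)
  rw [Function.comp_apply, splitHeight_symm_apply]

lemma setIntegral_cyl_eq_prod (f : (Fin 3 → ℝ) → ℝ) :
    ∫ x in cyl ρ h, f x = ∫ p in Ioo 0 h ×ˢ disc ρ, f ![p.2.1, p.2.2, p.1] := by
  rw [← splitHeight_symm_preimage_cyl,
    ← (measurePreserving_splitHeight.symm _).setIntegral_preimage_emb
      splitHeight.symm.measurableEmbedding]
  congr 1
  funext ⟨z, x, y⟩
  rw [splitHeight_symm_apply]

lemma setIntegral_cyl_eq_height_disc {f : (Fin 3 → ℝ) → ℝ} (hf : IntegrableOn f (cyl ρ h)) :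
    ∫ x in cyl ρ h, f x = ∫ z in Ioo 0 h, ∫ q in disc ρ, f ![q.1, q.2, z] := by
  rw [setIntegral_cyl_eq_prod, Measure.volume_eq_prod, ← Measure.prod_restrict]
  exact integral_prod _ (integrable_prod_of_integrableOn_cyl hf)

lemma setIntegral_cyl_eq_disc_height {f : (Fin 3 → ℝ) → ℝ} (hf : IntegrableOn f (cyl ρ h)) :
    ∫ x in cyl ρ h, f x = ∫ q in disc ρ, ∫ z in Ioo 0 h, f ![q.1, q.2, z] := by
  rw [setIntegral_cyl_eq_prod, Measure.volume_eq_prod, ← Measure.prod_restrict]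
  exact integral_prod_symm _ (integrable_prod_of_integrableOn_cyl hf)

end Fubini

section Derivatives

variable {ρ h : ℝ} {v : (Fin 3 → ℝ) → ℝ}

lemma contDiffOn_pdC (hρ : 0 < ρ) (hh : 0 < h) {n : WithTop ℕ∞}
    (hv : ContDiffOn ℝ (n + 1) v (closure (cyl ρ h))) (i : Fin 3) :
    ContDiffOn ℝ n (pdC ρ h i v) (closure (cyl ρ h)) :=
  (hv.fderivWithin (uniqueDiffOn_closure_cyl hρ hh) le_rfl).clm_apply contDiffOn_const

lemma continuousOn_pdC (hρ : 0 < ρ) (hh : 0 < h) (hv : ContDiffOn ℝ 1 v (closure (cyl ρ h)))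
    (i : Fin 3) : ContinuousOn (pdC ρ h i v) (closure (cyl ρ h)) :=
  (contDiffOn_pdC hρ hh (n := 0) hv i).continuousOn

lemma continuousOn_pdC_pdC (hρ : 0 < ρ) (hh : 0 < h) (hv : ContDiffOn ℝ 2 v (closure (cyl ρ h)))
    (i j : Fin 3) : ContinuousOn (pdC ρ h i (pdC ρ h j v)) (closure (cyl ρ h)) :=
  (contDiffOn_pdC hρ hh (n := 0) (contDiffOn_pdC hρ hh hv j) i).continuousOn

lemma continuousOn_lapC (hρ : 0 < ρ) (hh : 0 < h) (hv : ContDiffOn ℝ 2 v (closure (cyl ρ h))) :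
    ContinuousOn (lapC ρ h v) (closure (cyl ρ h)) :=
  continuousOn_finsetSum _ fun i _ => continuousOn_pdC_pdC hρ hh hv i i

lemma hasFDerivAt_of_mem_cyl (hv : DifferentiableOn ℝ v (closure (cyl ρ h))) {x : Fin 3 → ℝ}
    (hx : x ∈ cyl ρ h) : HasFDerivAt v (fderivWithin ℝ v (closure (cyl ρ h)) x) x :=
  (hv x (subset_closure hx)).hasFDerivWithinAt.hasFDerivAt
    (Filter.mem_of_superset (isOpen_cyl.mem_nhds hx) subset_closure)

lemma vec_mem_cyl {q : ℝ × ℝ} (hq : q ∈ disc ρ) {z : ℝ} (hz : z ∈ Ioo 0 h) :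
    ![q.1, q.2, z] ∈ cyl ρ h :=
  ⟨hq, hz⟩

lemma hasDerivAt_vertical (hv : DifferentiableOn ℝ v (closure (cyl ρ h))) {q : ℝ × ℝ}
    (hq : q ∈ disc ρ) {t : ℝ} (ht : t ∈ Ioo 0 h) :
    HasDerivAt (fun s => v ![q.1, q.2, s]) (pdC ρ h 2 v ![q.1, q.2, t]) t := by
  have hline : HasDerivAt (fun s : ℝ => ![q.1, q.2, s]) (Pi.single 2 1) t := by
    rw [hasDerivAt_pi]
    intro i
    fin_cases i <;> simp [hasDerivAt_const, hasDerivAt_id']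
  exact (hasFDerivAt_of_mem_cyl hv (vec_mem_cyl hq ht)).comp_hasDerivAt t hline

lemma hasFDerivAt_horizontal (hv : DifferentiableOn ℝ v (closure (cyl ρ h))) {q : ℝ × ℝ}
    (hq : q ∈ disc ρ) {z : ℝ} (hz : z ∈ Ioo 0 h) :
    HasFDerivAt (fun p : ℝ × ℝ => v ![p.1, p.2, z])
      (pdC ρ h 0 v ![q.1, q.2, z] • ContinuousLinearMap.fst ℝ ℝ ℝ +
        pdC ρ h 1 v ![q.1, q.2, z] • ContinuousLinearMap.snd ℝ ℝ ℝ) q := by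
  set L : ℝ × ℝ →L[ℝ] (Fin 3 → ℝ) := (ContinuousLinearMap.fst ℝ ℝ ℝ).smulRight (Pi.single 0 1) +
    (ContinuousLinearMap.snd ℝ ℝ ℝ).smulRight (Pi.single 1 1)
  have hplane : HasFDerivAt (fun p : ℝ × ℝ => ![p.1, p.2, z]) L q := by
    have : (fun p : ℝ × ℝ => ![p.1, p.2, z]) = fun p => ![0, 0, z] + L p := by
      funext p i
      fin_cases i <;> simp [L]
    rw [this]
    exact L.hasFDerivAt.const_add _
  refine ((hasFDerivAt_of_mem_cyl hv (vec_mem_cyl hq hz)).comp q hplane).congr_fderiv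
    (ContinuousLinearMap.ext fun p => ?_)
  simp [L, pdC, mul_comm]

lemma continuousOn_vertical (hρ : 0 < ρ) (hh : 0 < h) (hv : ContinuousOn v (closure (cyl ρ h)))
    {q : ℝ × ℝ} (hq : q ∈ closedDisc ρ) : ContinuousOn (fun t => v ![q.1, q.2, t]) (Icc 0 h) :=
  hv.comp (by fun_prop) fun _ ht => vec_mem_closure_cyl hρ hh hq ht

lemma continuousOn_horizontal (hρ : 0 < ρ) (hh : 0 < h) (hv : ContinuousOn v (closure (cyl ρ h)))
    {z : ℝ} (hz : z ∈ Icc 0 h) : ContinuousOn (fun q : ℝ × ℝ => v ![q.1, q.2, z]) (closedDisc ρ) :=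
  hv.comp (by fun_prop) fun _ hq => vec_mem_closure_cyl hρ hh hq hz

end Derivatives

section Vertical

variable {ρ h : ℝ} {u : (Fin 3 → ℝ) → ℝ}

lemma integral_vertical_green (hρ : 0 < ρ) (hh : 0 < h)
    (hu : ContDiffOn ℝ 2 u (closure (cyl ρ h))) {q : ℝ × ℝ} (hq : q ∈ disc ρ) :
    ∫ t in Ioo 0 h, (pdC ρ h 2 u ![q.1, q.2, t] ^ 2 +
        u ![q.1, q.2, t] * pdC ρ h 2 (pdC ρ h 2 u) ![q.1, q.2, t]) =
      u ![q.1, q.2, h] * pdC ρ h 2 u ![q.1, q.2, h] -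
        u ![q.1, q.2, 0] * pdC ρ h 2 u ![q.1, q.2, 0] := by
  have hu1 : ContDiffOn ℝ 1 (pdC ρ h 2 u) (closure (cyl ρ h)) := contDiffOn_pdC hρ hh hu 2
  have hline : ∀ {v}, ContinuousOn v (closure (cyl ρ h)) →
      ContinuousOn (fun t => v ![q.1, q.2, t]) (uIcc 0 h) := fun hv => by
    rw [uIcc_of_le hh.le]
    exact continuousOn_vertical hρ hh hv (disc_subset_closedDisc hq)
  have hIoo : Ioo (min 0 h) (max 0 h) = Ioo 0 h := by rw [min_eq_left hh.le, max_eq_right hh.le]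
  rw [← integral_Ioc_eq_integral_Ioo, ← intervalIntegral.integral_of_le hh.le,
    ← intervalIntegral.integral_deriv_mul_eq_sub_of_hasDerivAt (hline hu.continuousOn)
      (hline hu1.continuousOn)
      (fun t ht => hasDerivAt_vertical (hu.differentiableOn two_ne_zero) hq (hIoo ▸ ht))
      (fun t ht => hasDerivAt_vertical (hu1.differentiableOn one_ne_zero) hq (hIoo ▸ ht))
      (hline hu1.continuousOn).intervalIntegrable
      (hline (continuousOn_pdC hρ hh hu1 2)).intervalIntegrable]
  simp only [sq]

lemma integral_vertical_sq_le (hρ : 0 < ρ) (hh : 0 < h)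
    (hu : ContDiffOn ℝ 1 u (closure (cyl ρ h))) {q : ℝ × ℝ} (hq : q ∈ disc ρ)
    (hbot : u ![q.1, q.2, 0] = 0) :
    ∫ t in Ioo 0 h, u ![q.1, q.2, t] ^ 2 ≤
      4 * h ^ 2 * ∫ t in Ioo 0 h, pdC ρ h 2 u ![q.1, q.2, t] ^ 2 := by
  simp only [← integral_Ioc_eq_integral_Ioo, ← intervalIntegral.integral_of_le hh.le]
  simpa using integral_sq_le_of_apply_left_eq_zero hh.le
    (continuousOn_vertical hρ hh hu.continuousOn (disc_subset_closedDisc hq))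
    (continuousOn_vertical hρ hh (continuousOn_pdC hρ hh hu 2) (disc_subset_closedDisc hq))
    (fun t ht => hasDerivAt_vertical (hu.differentiableOn one_ne_zero) hq ht) hbot

end Vertical

section Horizontal

variable {ρ h : ℝ} {u : (Fin 3 → ℝ) → ℝ}

theorem integral_horizontal_green (hρ : 0 < ρ) (hh : 0 < h)
    (hu : ContDiffOn ℝ 2 u (closure (cyl ρ h)))
    (hlat : ∀ x y z : ℝ, x ^ 2 + y ^ 2 = ρ ^ 2 → 0 ≤ z → z ≤ h →
      x * pdC ρ h 0 u ![x, y, z] + y * pdC ρ h 1 u ![x, y, z] = 0)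
    {z : ℝ} (hz : z ∈ Ioo 0 h) :
    ∫ q in disc ρ, (pdC ρ h 0 u ![q.1, q.2, z] ^ 2 + pdC ρ h 1 u ![q.1, q.2, z] ^ 2 +
      u ![q.1, q.2, z] * (pdC ρ h 0 (pdC ρ h 0 u) ![q.1, q.2, z] +
        pdC ρ h 1 (pdC ρ h 1 u) ![q.1, q.2, z])) = 0 := by
  set D : ℝ × ℝ → ℝ := fun q => pdC ρ h 0 u ![q.1, q.2, z] ^ 2 + pdC ρ h 1 u ![q.1, q.2, z] ^ 2 +
    u ![q.1, q.2, z] * (pdC ρ h 0 (pdC ρ h 0 u) ![q.1, q.2, z] +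
      pdC ρ h 1 (pdC ρ h 1 u) ![q.1, q.2, z])
  have hu1 : ∀ i, ContDiffOn ℝ 1 (pdC ρ h i u) (closure (cyl ρ h)) := contDiffOn_pdC hρ hh hu
  have hslice : ∀ {v}, ContinuousOn v (closure (cyl ρ h)) →
      ContinuousOn (fun q : ℝ × ℝ => v ![q.1, q.2, z]) (closedDisc ρ) :=
    fun hv => continuousOn_horizontal hρ hh hv (Ioo_subset_Icc_self hz)
  have hgrad : ∀ {v}, DifferentiableOn ℝ v (closure (cyl ρ h)) → ∀ q ∈ disc ρ,
      HasFDerivAt (fun p : ℝ × ℝ => v ![p.1, p.2, z])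
        (pdC ρ h 0 v ![q.1, q.2, z] • ContinuousLinearMap.fst ℝ ℝ ℝ +
          pdC ρ h 1 v ![q.1, q.2, z] • ContinuousLinearMap.snd ℝ ℝ ℝ) q :=
    fun hv _ hq => hasFDerivAt_horizontal hv hq hz
  have hdu := hgrad (hu.differentiableOn two_ne_zero)
  have hd0 := hgrad ((hu1 0).differentiableOn one_ne_zero)
  have hd1 := hgrad ((hu1 1).differentiableOn one_ne_zero)
  -- the field `u ∇u`, whose divergence is `|∇u|² + u Δu` in the horizontal variables
  have key := integral_disc_divergence_eq_zero hρ
    (fun q hq => (hdu q hq).mul (hd0 q hq)) (fun q hq => (hdu q hq).mul (hd1 q hq))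
    ((hslice hu.continuousOn).mul (hslice (hu1 0).continuousOn))
    ((hslice hu.continuousOn).mul (hslice (hu1 1).continuousOn))
    ?_ fun q hq => ?_
  · refine Eq.trans ?_ key
    congr 1 with q
    simp only [add_apply, smul_apply, ContinuousLinearMap.coe_fst', ContinuousLinearMap.coe_snd',
      smul_eq_mul]
    ring
  · refine ContinuousOn.congr (f := D) ?_ fun q _ => ?_
    · exact hslice ((((hu1 0).continuousOn.pow 2).add ((hu1 1).continuousOn.pow 2)).add
        (hu.continuousOn.mul ((continuousOn_pdC_pdC hρ hh hu 0 0).add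
          (continuousOn_pdC_pdC hρ hh hu 1 1))))
    · simp only [add_apply, smul_apply, ContinuousLinearMap.coe_fst', ContinuousLinearMap.coe_snd',
        smul_eq_mul]
      ring
  · simp only [Pi.mul_apply]
    linear_combination u ![q.1, q.2, z] * hlat q.1 q.2 z hq hz.1.le hz.2.le

end Horizontal

section Energy

variable {ρ h : ℝ} {u : (Fin 3 → ℝ) → ℝ}

theorem integral_cyl_green (hρ : 0 < ρ) (hh : 0 < h) (hu : ContDiffOn ℝ 2 u (closure (cyl ρ h)))
    {φ α : ℝ} (hbc : BC ρ h u φ α) :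
    ∫ x in cyl ρ h, (∑ i, pdC ρ h i u x ^ 2 + u x * lapC ρ h u x) = π * ρ ^ 2 * (φ * α) := by
  obtain ⟨hcap, hlat⟩ := hbc
  have hc : ∀ i, ContinuousOn (pdC ρ h i u) (closure (cyl ρ h)) :=
    continuousOn_pdC hρ hh (hu.of_le one_le_two)
  have hcc : ∀ i, ContinuousOn (pdC ρ h i (pdC ρ h i u)) (closure (cyl ρ h)) :=
    fun i => continuousOn_pdC_pdC hρ hh hu i i
  set H := fun x => pdC ρ h 0 u x ^ 2 + pdC ρ h 1 u x ^ 2 +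
    u x * (pdC ρ h 0 (pdC ρ h 0 u) x + pdC ρ h 1 (pdC ρ h 1 u) x)
  set V := fun x => pdC ρ h 2 u x ^ 2 + u x * pdC ρ h 2 (pdC ρ h 2 u) x
  have hH : IntegrableOn H (cyl ρ h) := integrableOn_cyl_of_continuousOn
    ((((hc 0).pow 2).add ((hc 1).pow 2)).add (hu.continuousOn.mul ((hcc 0).add (hcc 1))))
  have hV : IntegrableOn V (cyl ρ h) :=
    integrableOn_cyl_of_continuousOn (((hc 2).pow 2).add (hu.continuousOn.mul (hcc 2)))
  have hH0 : ∫ x in cyl ρ h, H x = 0 := by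
    rw [setIntegral_cyl_eq_height_disc hH, setIntegral_congr_fun measurableSet_Ioo
      fun z hz => integral_horizontal_green hρ hh hu hlat hz]
    simp
  have hVφα : ∫ x in cyl ρ h, V x = π * ρ ^ 2 * (φ * α) := by
    rw [setIntegral_cyl_eq_disc_height hV, setIntegral_congr_fun measurableSet_disc
      fun q hq => integral_vertical_green hρ hh hu hq]
    have hends : ∀ q ∈ disc ρ, u ![q.1, q.2, h] * pdC ρ h 2 u ![q.1, q.2, h] -
        u ![q.1, q.2, 0] * pdC ρ h 2 u ![q.1, q.2, 0] = φ * α := fun q hq => by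
      obtain ⟨htop, htop', hbot, -⟩ := hcap q.1 q.2 (disc_subset_closedDisc hq)
      rw [htop, htop', hbot, zero_mul, sub_zero]
    rw [setIntegral_congr_fun measurableSet_disc hends, setIntegral_const, measureReal_disc hρ.le,
      smul_eq_mul]
  have hsplit : (fun x => ∑ i, pdC ρ h i u x ^ 2 + u x * lapC ρ h u x) = fun x => H x + V x := by
    funext x
    simp only [H, V, lapC, Fin.sum_univ_three]
    ring
  rw [hsplit, integral_add hH hV, hH0, hVφα, zero_add]

lemma integrableOn_cyl_sum_sq_pdC (hρ : 0 < ρ) (hh : 0 < h)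
    (hu : ContDiffOn ℝ 1 u (closure (cyl ρ h))) :
    IntegrableOn (fun x => ∑ i, pdC ρ h i u x ^ 2) (cyl ρ h) :=
  integrableOn_cyl_of_continuousOn
    (continuousOn_finsetSum _ fun i _ => (continuousOn_pdC hρ hh hu i).pow 2)

theorem integral_cyl_sq_le (hρ : 0 < ρ) (hh : 0 < h) (hu : ContDiffOn ℝ 1 u (closure (cyl ρ h)))
    (hbot : ∀ q ∈ disc ρ, u ![q.1, q.2, 0] = 0) :
    ∫ x in cyl ρ h, u x ^ 2 ≤ 4 * h ^ 2 * ∫ x in cyl ρ h, ∑ i, pdC ρ h i u x ^ 2 := by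
  have hU : IntegrableOn (fun x => u x ^ 2) (cyl ρ h) :=
    integrableOn_cyl_of_continuousOn (hu.continuousOn.pow 2)
  have hP : IntegrableOn (fun x => pdC ρ h 2 u x ^ 2) (cyl ρ h) :=
    integrableOn_cyl_of_continuousOn ((continuousOn_pdC hρ hh hu 2).pow 2)
  calc ∫ x in cyl ρ h, u x ^ 2
      ≤ 4 * h ^ 2 * ∫ x in cyl ρ h, pdC ρ h 2 u x ^ 2 := by
        rw [setIntegral_cyl_eq_disc_height hU, setIntegral_cyl_eq_disc_height hP,
          ← integral_const_mul]
        exact setIntegral_mono_on (integrable_prod_of_integrableOn_cyl hU).integral_prod_right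
          ((integrable_prod_of_integrableOn_cyl hP).integral_prod_right.const_mul _)
          measurableSet_disc fun q hq => integral_vertical_sq_le hρ hh hu hq (hbot q hq)
    _ ≤ 4 * h ^ 2 * ∫ x in cyl ρ h, ∑ i, pdC ρ h i u x ^ 2 :=
        mul_le_mul_of_nonneg_left (setIntegral_mono_on hP (integrableOn_cyl_sum_sq_pdC hρ hh hu)
          isOpen_cyl.measurableSet fun x _ =>
            Finset.single_le_sum (fun i _ => sq_nonneg (pdC ρ h i u x)) (Finset.mem_univ 2))
          (by positivity)

end Energy

theorem neg_two_mul_integral_mul_le {X : Type*} [MeasurableSpace X] {μ : Measure X} {f g : X → ℝ}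
    (hf : Integrable (fun x => f x ^ 2) μ) (hg : Integrable (fun x => g x ^ 2) μ)
    (hfg : Integrable (fun x => f x * g x) μ) (c : ℝ) :
    -(2 * c * ∫ x, f x * g x ∂μ) ≤ ∫ x, f x ^ 2 ∂μ + c ^ 2 * ∫ x, g x ^ 2 ∂μ := by
  calc -(2 * c * ∫ x, f x * g x ∂μ) = ∫ x, -(2 * c * (f x * g x)) ∂μ := by
        rw [integral_neg, integral_const_mul]
    _ ≤ ∫ x, (f x ^ 2 + c ^ 2 * g x ^ 2) ∂μ :=
        integral_mono (hfg.const_mul _).neg (hf.add (hg.const_mul _))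
          fun x => by nlinarith [sq_nonneg (f x + c * g x)]
    _ = ∫ x, f x ^ 2 ∂μ + c ^ 2 * ∫ x, g x ^ 2 ∂μ := by
        rw [integral_add hf (hg.const_mul _), integral_const_mul]

/-- If `u ∈ C²(closure Ω)` satisfies (BC), then
`∫_Ω |∇u|² ≤ πρ²(2φα + φ²) + 4h² ∫_Ω (Δu)²`. -/
theorem gradient_estimate_cylinder (ρ h : ℝ) (hρ : 0 < ρ) (hh : 1 / 2 < h)
    (u : (Fin 3 → ℝ) → ℝ) (φ α : ℝ)
    (hu : ContDiffOn ℝ 2 u (closure (cyl ρ h)))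
    (hbc : BC ρ h u φ α) :
    (∫ x in cyl ρ h, ∑ i, (pdC ρ h i u x) ^ 2) ≤
      π * ρ ^ 2 * (2 * φ * α + φ ^ 2) + 4 * h ^ 2 * ∫ x in cyl ρ h, (lapC ρ h u x) ^ 2 := by
  have hh0 : 0 < h := by linarith
  have hu1 : ContDiffOn ℝ 1 u (closure (cyl ρ h)) := hu.of_le one_le_two
  have hlap := continuousOn_lapC hρ hh0 hu
  have hgreen := integral_cyl_green hρ hh0 hu hbc
  rw [integral_add (integrableOn_cyl_sum_sq_pdC hρ hh0 hu1) (integrableOn_cyl_of_continuousOn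
    (f := fun x => u x * lapC ρ h u x) (hu.continuousOn.mul hlap))] at hgreen
  have hpoincare := integral_cyl_sq_le hρ hh0 hu1
    fun q hq => (hbc.1 q.1 q.2 (disc_subset_closedDisc hq)).2.2.1
  -- `c = 4h²` matches the Poincaré constant, so that half of `∫ |∇u|²` gets absorbed
  have hamgm := neg_two_mul_integral_mul_le
    (integrableOn_cyl_of_continuousOn (hu.continuousOn.pow 2))
    (integrableOn_cyl_of_continuousOn (hlap.pow 2))
    (integrableOn_cyl_of_continuousOn (hu.continuousOn.mul hlap)) (4 * h ^ 2)
  have hscaled : 4 * h ^ 2 * ∫ x in cyl ρ h, ∑ i, pdC ρ h i u x ^ 2 ≤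
      4 * h ^ 2 * (2 * (π * ρ ^ 2 * (φ * α)) + 4 * h ^ 2 * ∫ x in cyl ρ h, lapC ρ h u x ^ 2) := by
    nlinarith
  nlinarith [le_of_mul_le_mul_left hscaled (by positivity),
    mul_nonneg (mul_nonneg pi_pos.le (sq_nonneg ρ)) (sq_nonneg φ)]
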